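/- arXiv:2011.08934 — 10 statements merged into one kernel-verified Lean document; each statement's English description precedes it below -/
import Mathlib

section
/- For every θ ∈ [0, 2π) and every γ ∈ [0, π/2], max{Δt_f, Δt_b} ≥ 0, where Δt_f = 2γ − θ·(1 − cos γ) and Δt_b = 2γ + θ·(1 + cos γ) − 2π. That is, at least one of the two boundary light signals arrives no later than the bulk point. -/
/-!
Both delays are affine in `θ` and agree at `θ = π`, where they equal `2γ - π (1 - cos γ)`,
which is nonnegative by Jordan's inequality `cos γ ≥ 1 - 2γ/π`. Since `Δt_f` is nonincreasing
and `Δt_b` is nondecreasing in `θ`, the first dominates this value for `θ ≤ π` and the second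
for `θ ≥ π`.
-/

open Real

lemma Real.pi_mul_one_sub_cos_le {x : ℝ} (hx₀ : 0 ≤ x) (hx : x ≤ π / 2) :
    π * (1 - cos x) ≤ 2 * x := by
  calc π * (1 - cos x) ≤ π * (2 / π * x) := by
        gcongr
        linarith [one_sub_mul_le_cos hx₀ hx]
    _ = 2 * x := by field_simp

theorem circular_causality_general (θ γ : ℝ)
    (hγ : γ ∈ Set.Icc 0 (π / 2)) :
    max (2 * γ - θ * (1 - Real.cos γ)) (2 * γ + θ * (1 + Real.cos γ) - 2 * π) ≥ 0 := by
  have hJordan := pi_mul_one_sub_cos_le hγ.1 hγ.2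
  rcases le_total θ π with hθ | hθ
  · have : θ * (1 - cos γ) ≤ π * (1 - cos γ) :=
      mul_le_mul_of_nonneg_right hθ (sub_nonneg.2 (cos_le_one γ))
    exact le_max_of_le_left (by linarith)
  · have : π * (1 + cos γ) ≤ θ * (1 + cos γ) :=
      mul_le_mul_of_nonneg_right hθ (by linarith [neg_one_le_cos γ])
    exact le_max_of_le_right (by linarith)

/-- For a bulk point on a null circular trajectory of tortoise radius `γ` through
boundary angle `θ`, at least one of the forward/backward boundary signals arrives
no later than the bulk point: `max Δt_f Δt_b ≥ 0`. -/
theorem circular_causality (θ γ : ℝ) (hθ : θ ∈ Set.Ico 0 (2 * π))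
    (hγ : γ ∈ Set.Icc 0 (π / 2)) :
    max (2 * γ - θ * (1 - Real.cos γ)) (2 * γ + θ * (1 + Real.cos γ) - 2 * π) ≥ 0 :=
  circular_causality_general θ γ hγ
end

section
/- For every θ ∈ [π, 2π] and every γ ∈ [0, π/2], the backward time delay is nonnegative: Δt_b = 2γ + θ·(1 + cos γ) − 2π ≥ 0. -/
open Real

/-- For `θ ∈ [π, 2π]` and `γ ∈ [0, π/2]`, the backward time delay
`Δt_b = 2γ + θ(1 + cos γ) − 2π` is nonnegative. -/
theorem backward_delay_nonneg (θ γ : ℝ) (hθ : θ ∈ Set.Icc π (2 * π))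
    (hγ : γ ∈ Set.Icc 0 (π / 2)) :
    2 * γ + θ * (1 + Real.cos γ) - 2 * π ≥ 0 := by
  obtain ⟨hθ1, hθ2⟩ := hθ
  obtain ⟨hγ1, hγ2⟩ := hγ
  have hπ := Real.pi_pos
  have h1 : 2 / π * (π / 2 - γ) ≤ Real.sin (π / 2 - γ) :=
    Real.mul_le_sin (by linarith) (by linarith)
  rw [Real.sin_pi_div_two_sub] at h1
  have hc : (0:ℝ) ≤ 1 + Real.cos γ := by
    nlinarith [Real.neg_one_le_cos γ]
  have key : 2 * γ + π * (1 + Real.cos γ) - 2 * π ≥ 0 := by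
    have h2 := mul_le_mul_of_nonneg_left h1 hπ.le
    have h3 : π * (2 / π * (π / 2 - γ)) = π - 2 * γ := by
      field_simp
    rw [h3] at h2
    nlinarith
  nlinarith
end

section
/- Let r, r₀ ∈ (0, 1], let α be a real number, and set ρ = (1 − r₀²)/(2r₀). If ρ² = r² + (ρ + r₀)² − 2r(ρ + r₀)·cos α, then 2r₀/(1 + r₀²) = cos α · 2r/(1 + r²). Equivalently, in tortoise coordinates where cos γ₀ = 2r₀/(1 + r₀²) and cos γ = 2r/(1 + r²), one has cos γ₀ = cos α · cos γ. -/
open Real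

/-!
The center of the geodesic circle lies at distance `d = ρ + r₀ = (1 + r₀²)/(2r₀)` from the
origin, and orthogonality to the unit circle means `d² = ρ² + 1`. The law of cosines therefore
collapses to `1 + r² = 2 r d cos α`, and dividing by `d (1 + r²)` gives the claim, since
`1/d = 2r₀/(1 + r₀²)`.
-/

lemma geodesic_radius_add_gem {r₀ : ℝ} (hr₀ : r₀ ≠ 0) :
    (1 - r₀ ^ 2) / (2 * r₀) + r₀ = (1 + r₀ ^ 2) / (2 * r₀) := by
  field_simp
  ring

lemma sq_geodesic_center_eq_sq_radius_add_one {r₀ : ℝ} (hr₀ : r₀ ≠ 0) :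
    ((1 + r₀ ^ 2) / (2 * r₀)) ^ 2 = ((1 - r₀ ^ 2) / (2 * r₀)) ^ 2 + 1 := by
  field_simp
  ring

lemma inv_eq_cos_mul_of_law_of_cosines {ρ d r α : ℝ} (hd : d ≠ 0) (horth : d ^ 2 = ρ ^ 2 + 1)
    (hlaw : ρ ^ 2 = r ^ 2 + d ^ 2 - 2 * r * d * cos α) :
    d⁻¹ = cos α * (2 * r / (1 + r ^ 2)) := by
  have hcos : 1 + r ^ 2 = 2 * r * d * cos α := by linarith
  have hr : 1 + r ^ 2 ≠ 0 := by positivity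
  field_simp
  linarith

theorem mimic_point_relation_general (r r₀ α : ℝ)
    (hr₀ : r₀ ∈ Set.Ioc 0 1) (ρ : ℝ) (hρ : ρ = (1 - r₀ ^ 2) / (2 * r₀))
    (hlaw : ρ ^ 2 = r ^ 2 + (ρ + r₀) ^ 2 - 2 * r * (ρ + r₀) * Real.cos α) :
    2 * r₀ / (1 + r₀ ^ 2) = Real.cos α * (2 * r / (1 + r ^ 2)) := by
  have hr₀0 : r₀ ≠ 0 := hr₀.1.ne'
  subst hρ
  rw [geodesic_radius_add_gem hr₀0] at hlaw
  rw [← inv_div]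
  exact inv_eq_cos_mul_of_law_of_cosines (by positivity)
    (sq_geodesic_center_eq_sq_radius_add_one hr₀0) hlaw

/-- Law of cosines on the Poincaré disk: if a point at radius `r` lies on the encoding
geodesic whose gem is at radius `r₀` (a circular arc of radius `ρ = (1 − r₀²)/(2r₀)`),
at polar angle `α` from the gem, then `cos γ₀ = cos α · cos γ` in tortoise coordinates,
i.e. `2r₀/(1 + r₀²) = cos α · 2r/(1 + r²)`. -/
theorem mimic_point_relation (r r₀ α : ℝ) (hr : r ∈ Set.Ioc 0 1)
    (hr₀ : r₀ ∈ Set.Ioc 0 1) (ρ : ℝ) (hρ : ρ = (1 - r₀ ^ 2) / (2 * r₀))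
    (hlaw : ρ ^ 2 = r ^ 2 + (ρ + r₀) ^ 2 - 2 * r * (ρ + r₀) * Real.cos α) :
    2 * r₀ / (1 + r₀ ^ 2) = Real.cos α * (2 * r / (1 + r ^ 2)) :=
  mimic_point_relation_general r r₀ α hr₀ ρ hρ hlaw
end

section
/- Fix ℓ ∈ (0, 1) and τ ∈ (0, π/2). Then the functions γ and θ are differentiable at τ with derivatives γ′(τ) = √(1 − ℓ²)/√(1 + ℓ²·tan²τ) and θ′(τ) = ℓ·sec²τ/(1 + ℓ²·tan²τ); moreover θ′(τ) = ℓ/cos²(γ(τ)), so cos²(γ(τ))·θ′(τ) = ℓ is conserved along the curve. -/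
/-! Both curves are `arctan` of an algebraic function of `t = tan τ`, so the derivatives follow
from the chain rule and `tan' = 1 + tan²`. With `L² + ℓ² = 1` one has
`1 + (L t / √(1 + ℓ² t²))² = (1 + t²) / (1 + ℓ² t²)`, which both simplifies `γ′` and gives
`cos² γ = (1 + ℓ² tan² τ) / (1 + tan² τ) = ℓ / θ′`. -/

open Real

/-- Tortoise coordinate `γ(τ)` along the null geodesic of angular momentum `ℓ`:
`γ(τ) = arctan(√(1−ℓ²)·tan τ / √(1+ℓ²·tan²τ))` for `τ ∈ [0, π/2)`, with
`γ(π/2) = arctan(√(1−ℓ²)/ℓ)` if `ℓ > 0` and `π/2` if `ℓ = 0`, and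
`γ(τ) = γ(π − τ)` for `τ ∈ (π/2, π]`. -/
noncomputable def tortoiseGamma (l τ : ℝ) : ℝ :=
  if τ < π / 2 then
    Real.arctan (Real.sqrt (1 - l ^ 2) * Real.tan τ /
      Real.sqrt (1 + l ^ 2 * Real.tan τ ^ 2))
  else if τ = π / 2 then
    (if 0 < l then Real.arctan (Real.sqrt (1 - l ^ 2) / l) else π / 2)
  else
    Real.arctan (Real.sqrt (1 - l ^ 2) * Real.tan (π - τ) /
      Real.sqrt (1 + l ^ 2 * Real.tan (π - τ) ^ 2))

/-- Boundary angle `θ(τ)` along the null geodesic of angular momentum `ℓ`: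
`θ(τ) = arctan(ℓ·tan τ)` for `τ ∈ [0, π/2)`, `θ(π/2) = π/2`, and
`θ(τ) = π − θ(π − τ)` for `τ ∈ (π/2, π]`. -/
noncomputable def boundaryTheta (l τ : ℝ) : ℝ :=
  if τ < π / 2 then Real.arctan (l * Real.tan τ)
  else if τ = π / 2 then π / 2
  else π - Real.arctan (l * Real.tan (π - τ))

open Filter Topology

lemma one_add_sq_mul_div_sqrt {L l : ℝ} (hL : L ^ 2 + l ^ 2 = 1) (t : ℝ) :
    1 + (L * t / √(1 + l ^ 2 * t ^ 2)) ^ 2 = (1 + t ^ 2) / (1 + l ^ 2 * t ^ 2) := by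
  have hD : 0 < 1 + l ^ 2 * t ^ 2 := by positivity
  rw [div_pow, mul_pow, sq_sqrt hD.le]
  field_simp
  linear_combination t ^ 2 * hL

lemma cos_sq_arctan_mul_div_sqrt {L l : ℝ} (hL : L ^ 2 + l ^ 2 = 1) (t : ℝ) :
    cos (arctan (L * t / √(1 + l ^ 2 * t ^ 2))) ^ 2 = (1 + l ^ 2 * t ^ 2) / (1 + t ^ 2) := by
  rw [cos_sq_arctan, one_add_sq_mul_div_sqrt hL, one_div_div]

lemma hasDerivAt_arctan_mul_div_sqrt {L l : ℝ} (hL : L ^ 2 + l ^ 2 = 1) (t : ℝ) :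
    HasDerivAt (fun t => arctan (L * t / √(1 + l ^ 2 * t ^ 2)))
      (L / (√(1 + l ^ 2 * t ^ 2) * (1 + t ^ 2))) t := by
  have hD : 0 < 1 + l ^ 2 * t ^ 2 := by positivity
  have hsqrt : HasDerivAt (fun t => √(1 + l ^ 2 * t ^ 2))
      (l ^ 2 * (2 * t) / (2 * √(1 + l ^ 2 * t ^ 2))) t := by
    refine (((hasDerivAt_pow 2 t).const_mul (l ^ 2)).const_add 1).sqrt hD.ne' |>.congr_deriv ?_
    ring
  have hquot := (((hasDerivAt_id' t).const_mul L).div hsqrt (sqrt_pos.2 hD).ne').arctan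
  refine hquot.congr_deriv ?_
  simp only [Pi.div_apply, one_add_sq_mul_div_sqrt hL]
  have hs := sq_sqrt hD.le
  have hs0 := (sqrt_pos.2 hD).ne'
  generalize √(1 + l ^ 2 * t ^ 2) = s at hs hs0 ⊢
  field_simp
  linear_combination L * l ^ 2 * t ^ 2 * hs

lemma hasDerivAt_arctan_mul_tan_div_sqrt {L l τ : ℝ} (hL : L ^ 2 + l ^ 2 = 1) (hτ : cos τ ≠ 0) :
    HasDerivAt (fun x => arctan (L * tan x / √(1 + l ^ 2 * tan x ^ 2)))
      (L / √(1 + l ^ 2 * tan τ ^ 2)) τ := by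
  refine (hasDerivAt_arctan_mul_div_sqrt hL (tan τ)).comp τ (hasDerivAt_tan hτ) |>.congr_deriv ?_
  rw [← inv_one_add_tan_sq hτ]
  field_simp

lemma hasDerivAt_arctan_mul_tan (l : ℝ) {τ : ℝ} (hτ : cos τ ≠ 0) :
    HasDerivAt (fun x => arctan (l * tan x)) (l * (1 / cos τ ^ 2) / (1 + l ^ 2 * tan τ ^ 2)) τ := by
  refine ((hasDerivAt_tan hτ).const_mul l).arctan |>.congr_deriv ?_
  ring

lemma tortoiseGamma_of_lt (l : ℝ) {τ : ℝ} (hτ : τ < π / 2) :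
    tortoiseGamma l τ = arctan (√(1 - l ^ 2) * tan τ / √(1 + l ^ 2 * tan τ ^ 2)) :=
  if_pos hτ

lemma boundaryTheta_of_lt (l : ℝ) {τ : ℝ} (hτ : τ < π / 2) :
    boundaryTheta l τ = arctan (l * tan τ) :=
  if_pos hτ

lemma tortoiseGamma_eventuallyEq (l : ℝ) {τ : ℝ} (hτ : τ < π / 2) :
    tortoiseGamma l =ᶠ[𝓝 τ] fun x => arctan (√(1 - l ^ 2) * tan x / √(1 + l ^ 2 * tan x ^ 2)) :=
  (gt_mem_nhds hτ).mono fun _ => tortoiseGamma_of_lt l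

lemma boundaryTheta_eventuallyEq (l : ℝ) {τ : ℝ} (hτ : τ < π / 2) :
    boundaryTheta l =ᶠ[𝓝 τ] fun x => arctan (l * tan x) :=
  (gt_mem_nhds hτ).mono fun _ => boundaryTheta_of_lt l

/-- For `ℓ ∈ (0,1)` and `τ ∈ (0, π/2)`, `γ` and `θ` are differentiable at `τ` with
`γ′(τ) = √(1−ℓ²)/√(1+ℓ²·tan²τ)` and `θ′(τ) = ℓ·sec²τ/(1+ℓ²·tan²τ)`; moreover
`θ′(τ) = ℓ/cos²(γ(τ))`, so `cos²(γ(τ))·θ′(τ) = ℓ` is conserved. -/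
theorem null_geodesic_derivatives (l τ : ℝ) (hl : l ∈ Set.Ioo (0 : ℝ) 1)
    (hτ : τ ∈ Set.Ioo 0 (π / 2)) :
    HasDerivAt (tortoiseGamma l)
        (Real.sqrt (1 - l ^ 2) / Real.sqrt (1 + l ^ 2 * Real.tan τ ^ 2)) τ ∧
    HasDerivAt (boundaryTheta l)
        (l * (1 / Real.cos τ ^ 2) / (1 + l ^ 2 * Real.tan τ ^ 2)) τ ∧
    l * (1 / Real.cos τ ^ 2) / (1 + l ^ 2 * Real.tan τ ^ 2)
        = l / Real.cos (tortoiseGamma l τ) ^ 2 ∧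
    Real.cos (tortoiseGamma l τ) ^ 2 *
        (l * (1 / Real.cos τ ^ 2) / (1 + l ^ 2 * Real.tan τ ^ 2)) = l := by
  have hcos : cos τ ≠ 0 := (cos_pos_of_mem_Ioo ⟨by linarith [hτ.1, pi_pos], hτ.2⟩).ne'
  have hL : √(1 - l ^ 2) ^ 2 + l ^ 2 = 1 := by
    rw [sq_sqrt (by nlinarith [hl.1, hl.2])]
    ring
  have hcosγ_ne : cos (tortoiseGamma l τ) ≠ 0 := by
    rw [tortoiseGamma_of_lt l hτ.2]
    exact (cos_arctan_pos _).ne'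
  have hθ' : l * (1 / cos τ ^ 2) / (1 + l ^ 2 * tan τ ^ 2) = l / cos (tortoiseGamma l τ) ^ 2 := by
    rw [tortoiseGamma_of_lt l hτ.2, cos_sq_arctan_mul_div_sqrt hL, ← inv_one_add_tan_sq hcos]
    field_simp
  refine ⟨(hasDerivAt_arctan_mul_tan_div_sqrt hL hcos).congr_of_eventuallyEq
      (tortoiseGamma_eventuallyEq l hτ.2),
    (hasDerivAt_arctan_mul_tan l hcos).congr_of_eventuallyEq (boundaryTheta_eventuallyEq l hτ.2),
    hθ', ?_⟩
  rw [hθ']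
  field_simp
end

section
/- Fix ℓ ∈ [0, 1]. For every τ₂ ∈ [0, π], the forward time delay for minimally encoded boundary-to-bulk motion is nonnegative: τ₂ + γ(τ₂) − θ(τ₂) ≥ 0. That is, the forward boundary light signal, traversing the arc of angle θ(τ₂) − γ(τ₂) − γ(0), always arrives no later than the bulk point, whose travel time is τ₂. -/
open Real

lemma arctan_nonneg' {x : ℝ} (h : 0 ≤ x) : 0 ≤ Real.arctan x := by
  rw [← Real.arctan_zero]; exact Real.arctan_strictMono.monotone h

/-- Key inequality: for `σ ∈ [0, π/2)` and `ℓ ∈ [0,1]`,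
`σ ≤ arctan(√(1−ℓ²)·tan σ / √(1+ℓ²·tan²σ)) + arctan(ℓ·tan σ)`. -/
lemma key_ineq (l : ℝ) (hl0 : 0 ≤ l) (hl1 : l ≤ 1) (σ : ℝ) (hσ0 : 0 ≤ σ)
    (hσ : σ < π / 2) :
    σ ≤ Real.arctan (Real.sqrt (1 - l ^ 2) * Real.tan σ /
      Real.sqrt (1 + l ^ 2 * Real.tan σ ^ 2)) + Real.arctan (l * Real.tan σ) := by
  have hπ : (0:ℝ) < π / 2 := by positivity
  set t := Real.tan σ with ht_def
  have ht : 0 ≤ t := Real.tan_nonneg_of_nonneg_of_le_pi_div_two hσ0 hσ.le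
  set θ := Real.arctan (l * t) with hθ_def
  have hθ0 : 0 ≤ θ := arctan_nonneg' (by positivity)
  have hθlt : θ < π / 2 := Real.arctan_lt_pi_div_two _
  -- trig facts
  have hcσ : 0 < Real.cos σ := Real.cos_pos_of_mem_Ioo ⟨by linarith, hσ⟩
  have hcθ : 0 < Real.cos θ := Real.cos_arctan_pos _
  have hsσ : Real.sin σ = t * Real.cos σ := by
    rw [ht_def, Real.tan_eq_sin_div_cos]; field_simp
  have hsθ : Real.sin θ = l * t * Real.cos θ := by
    have h1 : Real.tan θ = l * t := Real.tan_arctan _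
    rw [Real.tan_eq_sin_div_cos] at h1
    field_simp at h1
    linarith [h1]
  have hden : (0:ℝ) < 1 + l * t ^ 2 := by nlinarith
  have htan_sub : Real.tan (σ - θ) = (t - l * t) / (1 + l * t ^ 2) := by
    have hpos : 0 < Real.cos σ * Real.cos θ + Real.sin σ * Real.sin θ := by
      rw [hsσ, hsθ]
      nlinarith [mul_pos hcσ hcθ, mul_nonneg (mul_nonneg ht hcσ.le)
        (mul_nonneg (mul_nonneg hl0 ht) hcθ.le)]
    rw [Real.tan_eq_sin_div_cos, Real.sin_sub, Real.cos_sub,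
      div_eq_div_iff hpos.ne' hden.ne']
    rw [hsσ, hsθ]
    ring
  -- the comparison of tangents
  have hD2 : (0:ℝ) < 1 + l ^ 2 * t ^ 2 := by positivity
  have hD : (0:ℝ) < Real.sqrt (1 + l ^ 2 * t ^ 2) := Real.sqrt_pos.mpr hD2
  have hsq : (1 - l) ^ 2 * (1 + l ^ 2 * t ^ 2) ≤ (1 - l ^ 2) * (1 + l * t ^ 2) ^ 2 := by
    nlinarith [sq_nonneg t, sq_nonneg (l * t), mul_nonneg hl0 (sq_nonneg t),
      mul_nonneg (mul_nonneg hl0 hl0) (sq_nonneg (t*t)),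
      mul_nonneg (sub_nonneg.mpr hl1) (mul_nonneg hl0 (sq_nonneg t)),
      mul_nonneg (sub_nonneg.mpr hl1) (mul_nonneg (mul_nonneg hl0 hl0) (sq_nonneg (t*t)))]
  have hkey : (1 - l) * Real.sqrt (1 + l ^ 2 * t ^ 2) ≤
      Real.sqrt (1 - l ^ 2) * (1 + l * t ^ 2) := by
    have h1 : (1 - l) * Real.sqrt (1 + l ^ 2 * t ^ 2) =
        Real.sqrt ((1 - l) ^ 2 * (1 + l ^ 2 * t ^ 2)) := by
      rw [Real.sqrt_mul (sq_nonneg _), Real.sqrt_sq (by linarith)]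
    have h2 : Real.sqrt (1 - l ^ 2) * (1 + l * t ^ 2) =
        Real.sqrt ((1 - l ^ 2) * (1 + l * t ^ 2) ^ 2) := by
      rw [Real.sqrt_mul (by nlinarith), Real.sqrt_sq hden.le]
    rw [h1, h2]
    exact Real.sqrt_le_sqrt hsq
  have hcmp : (t - l * t) / (1 + l * t ^ 2) ≤
      Real.sqrt (1 - l ^ 2) * t / Real.sqrt (1 + l ^ 2 * t ^ 2) := by
    rw [div_le_div_iff₀ hden hD]
    have : (t - l * t) * Real.sqrt (1 + l ^ 2 * t ^ 2) =
        t * ((1 - l) * Real.sqrt (1 + l ^ 2 * t ^ 2)) := by ring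
    rw [this]
    have h2 : Real.sqrt (1 - l ^ 2) * t * (1 + l * t ^ 2) =
        t * (Real.sqrt (1 - l ^ 2) * (1 + l * t ^ 2)) := by ring
    rw [h2]
    exact mul_le_mul_of_nonneg_left hkey ht
  -- conclude
  have hrange1 : -(π / 2) < σ - θ := by linarith
  have hrange2 : σ - θ < π / 2 := by linarith
  have : σ - θ = Real.arctan (Real.tan (σ - θ)) := (Real.arctan_tan hrange1 hrange2).symm
  have hmono : Real.arctan (Real.tan (σ - θ)) ≤
      Real.arctan (Real.sqrt (1 - l ^ 2) * t / Real.sqrt (1 + l ^ 2 * t ^ 2)) := by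
    apply Real.arctan_strictMono.monotone
    rw [htan_sub]; exact hcmp
  linarith [this ▸ hmono]

/-- Boundary-to-bulk causality, forward signal: for `ℓ ∈ [0,1]` and `τ₂ ∈ [0, π]`,
the forward time delay `Δt_f(τ₂) = τ₂ + γ(τ₂) − θ(τ₂)` is nonnegative. -/
theorem forward_delay_boundary_to_bulk (l : ℝ) (hl : l ∈ Set.Icc (0 : ℝ) 1) :
    ∀ τ₂ ∈ Set.Icc 0 π, τ₂ + tortoiseGamma l τ₂ - boundaryTheta l τ₂ ≥ 0 := by
  obtain ⟨hl0, hl1⟩ := hl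
  rintro τ ⟨hτ0, hτπ⟩
  rcases lt_trichotomy τ (π / 2) with h | h | h
  · -- τ < π/2
    rw [tortoiseGamma, boundaryTheta, if_pos h, if_pos h]
    have ht : 0 ≤ Real.tan τ := Real.tan_nonneg_of_nonneg_of_le_pi_div_two hτ0 h.le
    have hγ : 0 ≤ Real.arctan (Real.sqrt (1 - l ^ 2) * Real.tan τ /
        Real.sqrt (1 + l ^ 2 * Real.tan τ ^ 2)) :=
      arctan_nonneg' (by positivity)
    have hθ : Real.arctan (l * Real.tan τ) ≤ τ := by
      calc Real.arctan (l * Real.tan τ) ≤ Real.arctan (Real.tan τ) :=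
            Real.arctan_strictMono.monotone (by nlinarith)
        _ = τ := Real.arctan_tan (by linarith [Real.pi_pos]) h
    linarith
  · -- τ = π/2
    subst h
    rw [tortoiseGamma, boundaryTheta, if_neg (lt_irrefl _), if_pos rfl,
      if_neg (lt_irrefl _), if_pos rfl]
    rcases lt_or_ge 0 l with hl' | hl'
    · rw [if_pos hl']
      have := arctan_nonneg' (show (0:ℝ) ≤ Real.sqrt (1 - l ^ 2) / l by positivity)
      linarith
    · rw [if_neg (not_lt.mpr hl')]; linarith
  · -- τ > π/2
    rw [tortoiseGamma, boundaryTheta, if_neg (by linarith), if_neg (by linarith),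
      if_neg (by linarith), if_neg (by linarith)]
    have hσ0 : 0 ≤ π - τ := by linarith
    have hσ : π - τ < π / 2 := by linarith
    have hk := key_ineq l hl0 hl1 (π - τ) hσ0 hσ
    linarith
end

section
/- Fix ℓ ∈ [0, 1]. For every τ₂ ∈ [0, π], the backward time delay for minimally encoded boundary-to-bulk motion is nonpositive: τ₂ + γ(τ₂) + θ(τ₂) ≤ 2π. That is, the backward boundary light signal, traversing the arc of angle 2π − θ(τ₂) − γ(τ₂) − γ(0), never arrives before the bulk point, whose travel time is τ₂. -/
open Real

/-- Boundary-to-bulk causality, backward signal: for `ℓ ∈ [0,1]` and `τ₂ ∈ [0, π]`,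
the backward time delay is nonpositive: `τ₂ + γ(τ₂) + θ(τ₂) ≤ 2π`. -/
theorem backward_delay_boundary_to_bulk (l : ℝ) (hl : l ∈ Set.Icc (0 : ℝ) 1) :
    ∀ τ₂ ∈ Set.Icc 0 π, τ₂ + tortoiseGamma l τ₂ + boundaryTheta l τ₂ ≤ 2 * π := by
  obtain ⟨hl0, hl1⟩ := hl
  rintro τ ⟨h0, hπ⟩
  unfold tortoiseGamma boundaryTheta
  by_cases h1 : τ < π / 2
  · simp only [if_pos h1]
    have g1 := Real.arctan_lt_pi_div_two (Real.sqrt (1 - l ^ 2) * Real.tan τ /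
      Real.sqrt (1 + l ^ 2 * Real.tan τ ^ 2))
    have g2 := Real.arctan_lt_pi_div_two (l * Real.tan τ)
    nlinarith [Real.pi_pos]
  · by_cases h2 : τ = π / 2
    · simp only [if_neg h1, if_pos h2]
      subst h2
      split
      · have := Real.arctan_lt_pi_div_two (Real.sqrt (1 - l ^ 2) / l)
        nlinarith [Real.pi_pos]
      · nlinarith [Real.pi_pos]
    · simp only [if_neg h1, if_neg h2]
      set s := π - τ with hs
      have hs0 : 0 ≤ s := by simp [hs]; linarith
      have hs2 : s < π / 2 := by
        have : π / 2 < τ := lt_of_le_of_ne (not_lt.mp h1) (Ne.symm h2)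
        simp [hs]; linarith
      have ht0 : 0 ≤ Real.tan s := Real.tan_nonneg_of_nonneg_of_le_pi_div_two hs0 (le_of_lt hs2)
      -- arctan A ≤ s
      have hA : Real.sqrt (1 - l ^ 2) * Real.tan s /
          Real.sqrt (1 + l ^ 2 * Real.tan s ^ 2) ≤ Real.tan s := by
        have hc : Real.sqrt (1 - l ^ 2) ≤ 1 :=
          Real.sqrt_le_one.mpr (by nlinarith)
        have hd : (1:ℝ) ≤ Real.sqrt (1 + l ^ 2 * Real.tan s ^ 2) :=
          Real.one_le_sqrt.mpr (by nlinarith)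
        have hnum : Real.sqrt (1 - l ^ 2) * Real.tan s ≤ Real.tan s := by
          nlinarith [Real.sqrt_nonneg (1 - l ^ 2)]
        calc Real.sqrt (1 - l ^ 2) * Real.tan s /
            Real.sqrt (1 + l ^ 2 * Real.tan s ^ 2)
            ≤ Real.sqrt (1 - l ^ 2) * Real.tan s := by
              apply div_le_self (by positivity) hd
          _ ≤ Real.tan s := hnum
      have hγ : Real.arctan (Real.sqrt (1 - l ^ 2) * Real.tan s /
          Real.sqrt (1 + l ^ 2 * Real.tan s ^ 2)) ≤ s := by
        calc _ ≤ Real.arctan (Real.tan s) := Real.arctan_strictMono.monotone hA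
          _ = s := Real.arctan_tan (by linarith [Real.pi_pos]) hs2
      have hθ : 0 ≤ Real.arctan (l * Real.tan s) := by
        rw [← Real.arctan_zero]
        exact Real.arctan_strictMono.monotone (by positivity)
      linarith
end

section
/- For every ℓ ∈ [0, 1] and every real x ≥ 0, the inequality 1 + ℓ²·x ≤ ℓ·(1 + x) + √(1 − ℓ²)·√(1 + ℓ²·x) holds. Equivalently, with f = √(1 + ℓ²·tan²σ), L = √(1 − ℓ²), and sec²σ = 1 + tan²σ, one has f² − ℓ·sec²σ − L·f ≤ L² − L ≤ 0 for every σ with tan σ defined. -/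
open Real

/-- Key algebraic inequality: for `ℓ ∈ [0,1]` and `x ≥ 0`,
`1 + ℓ²x ≤ ℓ(1 + x) + √(1 − ℓ²)·√(1 + ℓ²x)`. -/
theorem key_algebraic_inequality (l x : ℝ) (hl : l ∈ Set.Icc (0 : ℝ) 1) (hx : 0 ≤ x) :
    1 + l ^ 2 * x ≤ l * (1 + x) + Real.sqrt (1 - l ^ 2) * Real.sqrt (1 + l ^ 2 * x) := by
  obtain ⟨hl0, hl1⟩ := hl
  set s := Real.sqrt (1 - l ^ 2) with hs
  set t := Real.sqrt (1 + l ^ 2 * x) with ht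
  have hs0 : 0 ≤ s := Real.sqrt_nonneg _
  have ht0 : 0 ≤ t := Real.sqrt_nonneg _
  have hs2 : s ^ 2 = 1 - l ^ 2 := Real.sq_sqrt (by nlinarith)
  have ht2 : t ^ 2 = 1 + l ^ 2 * x := Real.sq_sqrt (by nlinarith)
  -- goal equivalent to (1-l)*(1-l*x) ≤ s*t
  have hst : 0 ≤ s * t := mul_nonneg hs0 ht0
  rcases le_or_gt ((1 - l) * (1 - l * x)) 0 with h | h
  · nlinarith
  · -- both sides nonneg; compare squares
    have hlx : l * x ≤ 1 := by nlinarith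
    have hsq : ((1 - l) * (1 - l * x)) ^ 2 ≤ (s * t) ^ 2 := by
      have : (s * t) ^ 2 = (1 - l ^ 2) * (1 + l ^ 2 * x) := by
        rw [mul_pow, hs2, ht2]
      rw [this]
      nlinarith [mul_nonneg hl0 hx, mul_nonneg (mul_nonneg hl0 hx) hx,
        mul_nonneg (mul_nonneg hl0 hl0) (mul_nonneg hx hx), sq_nonneg (1 - l),
        mul_nonneg (mul_nonneg hl0 (sub_nonneg.2 hl1)) hx,
        mul_nonneg (mul_nonneg (mul_nonneg hl0 (sub_nonneg.2 hl1)) hx) hx]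
    nlinarith [hsq, h, hst]
end

section
/- Fix ℓ ∈ [0, 1]. The backward time delay function Δt_b(τ) = τ + γ(τ) + θ(τ) − 2π is nondecreasing on the interval [0, π], with Δt_b(0) = −2π ≤ 0 and Δt_b(π) = 0. -/
open Real

lemma gamma_aux (l : ℝ) (hl0 : 0 ≤ l) (hl1 : l ≤ 1) {τ : ℝ} (hτ0 : 0 ≤ τ)
    (hτ : τ < π / 2) :
    Real.arctan (Real.sqrt (1 - l ^ 2) * Real.tan τ /
      Real.sqrt (1 + l ^ 2 * Real.tan τ ^ 2)) =
    Real.arcsin (Real.sqrt (1 - l ^ 2) * Real.sin τ) := by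
  have hπ := Real.pi_pos
  set c := Real.sqrt (1 - l ^ 2) with hcdef
  have hc0 : 0 ≤ c := Real.sqrt_nonneg _
  have hc1 : c ≤ 1 := by
    have : c ≤ Real.sqrt 1 := Real.sqrt_le_sqrt (by nlinarith)
    simpa using this
  have hc2 : c ^ 2 = 1 - l ^ 2 := Real.sq_sqrt (by nlinarith)
  have hcos : 0 < Real.cos τ := Real.cos_pos_of_mem_Ioo ⟨by linarith, hτ⟩
  have hsin0 : 0 ≤ Real.sin τ := Real.sin_nonneg_of_nonneg_of_le_pi hτ0 (by linarith)
  have hsin1 : Real.sin τ < 1 := by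
    have := Real.strictMonoOn_sin (a := τ) (b := π / 2)
      ⟨by linarith, hτ.le⟩ ⟨by linarith, le_refl _⟩ hτ
    simpa using this
  have hx0 : 0 ≤ c * Real.sin τ := mul_nonneg hc0 hsin0
  have hx1 : c * Real.sin τ < 1 :=
    lt_of_le_of_lt (mul_le_of_le_one_left hsin0 hc1) hsin1
  rw [Real.arcsin_eq_arctan ⟨by linarith, hx1⟩]
  congr 1
  have key : 1 - (c * Real.sin τ) ^ 2 = Real.cos τ ^ 2 * (1 + l ^ 2 * Real.tan τ ^ 2) := by
    rw [Real.tan_eq_sin_div_cos]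
    have hpy := Real.sin_sq_add_cos_sq τ
    field_simp
    nlinarith [hpy, hc2]
  have hK : (0:ℝ) < 1 + l ^ 2 * Real.tan τ ^ 2 := by positivity
  have hs : Real.sqrt (1 - (c * Real.sin τ) ^ 2)
      = Real.cos τ * Real.sqrt (1 + l ^ 2 * Real.tan τ ^ 2) := by
    rw [key, Real.sqrt_mul (sq_nonneg _), Real.sqrt_sq hcos.le]
  rw [hs, Real.tan_eq_sin_div_cos]
  have hsK : 0 < Real.sqrt (1 + l ^ 2 * Real.tan τ ^ 2) := Real.sqrt_pos.mpr hK
  field_simp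

lemma gamma_eq (l : ℝ) (hl0 : 0 ≤ l) (hl1 : l ≤ 1) {τ : ℝ} (hτ0 : 0 ≤ τ) (hτπ : τ ≤ π) :
    tortoiseGamma l τ = Real.arcsin (Real.sqrt (1 - l ^ 2) * Real.sin τ) := by
  have hπ := Real.pi_pos
  rcases lt_trichotomy τ (π / 2) with h | h | h
  · rw [tortoiseGamma, if_pos h]
    exact gamma_aux l hl0 hl1 hτ0 h
  · subst h
    rw [tortoiseGamma, if_neg (lt_irrefl _), if_pos rfl]
    rcases lt_or_eq_of_le hl0 with hl | hl
    · rw [if_pos hl, Real.sin_pi_div_two, mul_one]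
      have hc0 : 0 ≤ Real.sqrt (1 - l ^ 2) := Real.sqrt_nonneg _
      have hc1 : Real.sqrt (1 - l ^ 2) < 1 := by
        have : Real.sqrt (1 - l ^ 2) < Real.sqrt 1 :=
          Real.sqrt_lt_sqrt (by nlinarith) (by nlinarith)
        simpa using this
      rw [Real.arcsin_eq_arctan ⟨by linarith, hc1⟩]
      congr 1
      rw [Real.sq_sqrt (by nlinarith : (0:ℝ) ≤ 1 - l ^ 2),
        show (1:ℝ) - (1 - l ^ 2) = l ^ 2 by ring, Real.sqrt_sq hl0]
    · rw [if_neg (by rw [← hl]; exact lt_irrefl 0), ← hl]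
      norm_num
  · rw [tortoiseGamma, if_neg (by linarith), if_neg h.ne']
    rw [gamma_aux l hl0 hl1 (τ := π - τ) (by linarith) (by linarith), Real.sin_pi_sub]

lemma g_mono (l : ℝ) (hl0 : 0 ≤ l) (hl1 : l ≤ 1) :
    MonotoneOn (fun τ => τ + Real.arcsin (Real.sqrt (1 - l ^ 2) * Real.sin τ))
      (Set.Icc 0 π) := by
  have hπ := Real.pi_pos
  rcases eq_or_lt_of_le hl0 with h0 | h0
  · -- l = 0
    have hs1 : Real.sqrt (1 - l ^ 2) = 1 := by rw [← h0]; norm_num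
    have key : ∀ x ∈ Set.Icc (0:ℝ) π, x + Real.arcsin (Real.sin x) = min (2 * x) π := by
      intro x hx
      rcases le_total x (π / 2) with h | h
      · rw [Real.arcsin_sin (by linarith [hx.1]) h, min_eq_left (by linarith)]; ring
      · have h2 : Real.arcsin (Real.sin x) = π - x := by
          rw [← Real.sin_pi_sub, Real.arcsin_sin (by linarith [hx.2]) (by linarith)]
        rw [h2, min_eq_right (by linarith)]; ring
    intro a ha b hb hab
    simp only [hs1, one_mul]
    rw [key a ha, key b hb]
    exact min_le_min (by linarith) le_rfl
  · -- 0 < l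
    set c := Real.sqrt (1 - l ^ 2) with hcdef
    have hc0 : 0 ≤ c := Real.sqrt_nonneg _
    have hc1 : c < 1 := by
      have : c < Real.sqrt 1 := Real.sqrt_lt_sqrt (by nlinarith) (by nlinarith)
      simpa using this
    have hder : ∀ x : ℝ, HasDerivAt (fun τ => τ + Real.arcsin (c * Real.sin τ))
        (1 + 1 / Real.sqrt (1 - (c * Real.sin x) ^ 2) * (c * Real.cos x)) x := by
      intro x
      have hb1 : |c * Real.sin x| < 1 := by
        rw [abs_mul, abs_of_nonneg hc0]
        calc c * |Real.sin x| ≤ c * 1 := by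
              exact mul_le_mul_of_nonneg_left (Real.abs_sin_le_one x) hc0
          _ < 1 := by linarith
      have hne1 : c * Real.sin x ≠ 1 := by
        intro h; rw [h] at hb1; simp at hb1
      have hne1' : c * Real.sin x ≠ -1 := by
        intro h; rw [h] at hb1; simp at hb1
      have h1 : HasDerivAt (fun τ => c * Real.sin τ) (c * Real.cos x) x :=
        (Real.hasDerivAt_sin x).const_mul c
      have h2 := (Real.hasDerivAt_arcsin hne1' hne1).comp x h1
      exact (hasDerivAt_id x).add h2
    apply monotoneOn_of_deriv_nonneg (convex_Icc 0 π)
    · exact (continuous_id.add (Real.continuous_arcsin.comp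
        (continuous_const.mul Real.continuous_sin))).continuousOn
    · intro x _
      exact (hder x).differentiableAt.differentiableWithinAt
    · intro x _
      rw [(hder x).deriv]
      set u := c * Real.sin x with hu
      have hcsq : c ^ 2 < 1 := by nlinarith
      have hueq : u ^ 2 = c ^ 2 * Real.sin x ^ 2 := by rw [hu]; ring
      have hu2 : u ^ 2 < 1 := by
        nlinarith [Real.sin_sq_le_one x, sq_nonneg (Real.sin x), hueq, hcsq, sq_nonneg c]
      set s := Real.sqrt (1 - u ^ 2) with hsdef
      have hs0 : 0 < s := Real.sqrt_pos.mpr (by linarith)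
      have hs2 : s ^ 2 = 1 - u ^ 2 := Real.sq_sqrt (by linarith)
      have hcc : (c * Real.cos x) ^ 2 ≤ s ^ 2 := by
        nlinarith [Real.sin_sq_add_cos_sq x, hueq, hcsq, sq_nonneg (Real.sin x)]
      have hbnd : -s ≤ c * Real.cos x := by
        nlinarith [sq_nonneg (c * Real.cos x + s)]
      have h3 : 1 / s * (-s) ≤ 1 / s * (c * Real.cos x) :=
        mul_le_mul_of_nonneg_left hbnd (by positivity)
      have h4 : 1 / s * (-s) = -1 := by field_simp
      linarith [h3, h4 ▸ h3]

lemma theta_mono (l : ℝ) (hl0 : 0 ≤ l) : MonotoneOn (boundaryTheta l) (Set.Icc 0 π) := by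
  have hπ := Real.pi_pos
  have reg1 : ∀ {τ : ℝ}, τ < π / 2 → boundaryTheta l τ = Real.arctan (l * Real.tan τ) :=
    fun h => if_pos h
  have reg3 : ∀ {τ : ℝ}, π / 2 < τ →
      boundaryTheta l τ = π - Real.arctan (l * Real.tan (π - τ)) := by
    intro τ h
    rw [boundaryTheta, if_neg (by linarith), if_neg h.ne']
  have tanle : ∀ x y : ℝ, 0 ≤ x → x ≤ y → y < π / 2 →
      Real.arctan (l * Real.tan x) ≤ Real.arctan (l * Real.tan y) := by
    intro x y hx hxy hy
    apply Real.arctan_strictMono.monotone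
    exact mul_le_mul_of_nonneg_left
      (Real.strictMonoOn_tan.monotoneOn ⟨by linarith, by linarith⟩ ⟨by linarith, hy⟩ hxy) hl0
  intro a ha b hb hab
  obtain ⟨ha0, haπ⟩ := ha
  obtain ⟨hb0, hbπ⟩ := hb
  rcases lt_trichotomy a (π / 2) with h1 | h1 | h1
  · rcases lt_trichotomy b (π / 2) with h2 | h2 | h2
    · rw [reg1 h1, reg1 h2]; exact tanle a b ha0 hab h2
    · rw [reg1 h1, boundaryTheta, if_neg (by linarith), if_pos h2]
      exact (Real.arctan_lt_pi_div_two _).le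
    · rw [reg1 h1, reg3 h2]
      have := Real.arctan_lt_pi_div_two (l * Real.tan (π - b))
      have := Real.arctan_lt_pi_div_two (l * Real.tan a)
      linarith
  · subst h1
    rcases eq_or_lt_of_le hab with h2 | h2
    · rw [← h2]
    · rw [reg3 h2, boundaryTheta, if_neg (lt_irrefl _), if_pos rfl]
      have := Real.arctan_lt_pi_div_two (l * Real.tan (π - b))
      linarith
  · have h2 : π / 2 < b := lt_of_lt_of_le h1 hab
    rw [reg3 h1, reg3 h2]
    have := tanle (π - b) (π - a) (by linarith) (by linarith) (by linarith)
    linarith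

/-- The backward time delay `Δt_b(τ) = τ + γ(τ) + θ(τ) − 2π` is nondecreasing on
`[0, π]`, with `Δt_b(0) = −2π ≤ 0` and `Δt_b(π) = 0`. -/
theorem backward_delay_monotone (l : ℝ) (hl : l ∈ Set.Icc (0 : ℝ) 1) :
    MonotoneOn (fun τ => τ + tortoiseGamma l τ + boundaryTheta l τ - 2 * π)
      (Set.Icc 0 π) ∧
    (0 : ℝ) + tortoiseGamma l 0 + boundaryTheta l 0 - 2 * π = -(2 * π) ∧
    -(2 * π) ≤ (0 : ℝ) ∧
    π + tortoiseGamma l π + boundaryTheta l π - 2 * π = 0 := by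
  have hπ := Real.pi_pos
  obtain ⟨hl0, hl1⟩ := hl
  have hγ0 : tortoiseGamma l 0 = 0 := by
    rw [tortoiseGamma, if_pos (by linarith)]
    simp [Real.tan_zero]
  have hθ0 : boundaryTheta l 0 = 0 := by
    rw [boundaryTheta, if_pos (by linarith)]
    simp [Real.tan_zero]
  have hγπ : tortoiseGamma l π = 0 := by
    rw [tortoiseGamma, if_neg (by linarith), if_neg (by intro h; linarith [h ▸ hπ])]
    simp [Real.tan_zero]
  have hθπ : boundaryTheta l π = π := by
    rw [boundaryTheta, if_neg (by linarith), if_neg (by intro h; linarith [h ▸ hπ])]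
    simp [Real.tan_zero]
  refine ⟨?_, by rw [hγ0, hθ0]; ring, by linarith, by rw [hγπ, hθπ]; ring⟩
  intro a ha b hb hab
  simp only
  rw [gamma_eq l hl0 hl1 ha.1 ha.2, gamma_eq l hl0 hl1 hb.1 hb.2]
  have hg := g_mono l hl0 hl1 ha hb hab
  have ht := theta_mono l hl0 ha hb hab
  simp only at hg
  linarith
end

section
/- Fix ℓ ∈ [0, 1], let τ₁ ∈ [0, π/2] and τ₂ ∈ [τ₁, π]. Then the forward time delay for minimally encoded bulk-to-bulk motion along a null geodesic is nonnegative: (τ₂ − τ₁) + γ(τ₁) + γ(τ₂) − (θ(τ₂) − θ(τ₁)) ≥ 0. That is, the forward boundary light signal, traversing the arc of angle (θ(τ₂) − θ(τ₁)) − γ(τ₁) − γ(τ₂), always arrives no later than the bulk point, whose travel time is τ₂ − τ₁. -/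
open Real

/-- Key arctangent inequality: `arctan t ≤ arctan(ℓt) + arctan(√(1−ℓ²)·t/√(1+ℓ²t²))`. -/
lemma key_arctan (l t : ℝ) (hl0 : 0 ≤ l) (hl1 : l ≤ 1) (ht : 0 ≤ t) :
    Real.arctan t ≤ Real.arctan (l * t) +
      Real.arctan (Real.sqrt (1 - l ^ 2) * t / Real.sqrt (1 + l ^ 2 * t ^ 2)) := by
  set c : ℝ := (1 - l) * t / (1 + l * t ^ 2) with hc
  have hden : (0:ℝ) < 1 + l * t ^ 2 := by positivity
  have hmul : (l * t) * c < 1 := by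
    have he : (l * t) * c = (l * t * ((1 - l) * t)) / (1 + l * t ^ 2) := by
      rw [hc]; ring
    rw [he, div_lt_one hden]
    nlinarith [sq_nonneg (l*t)]
  have hadd : Real.arctan (l * t) + Real.arctan c = Real.arctan t := by
    rw [Real.arctan_add hmul]
    congr 1
    have hd2 : (0:ℝ) < 1 + l ^ 2 * t ^ 2 := by positivity
    have h2 : 1 - l * t * c = (1 + l ^ 2 * t ^ 2) / (1 + l * t ^ 2) := by
      rw [hc]; field_simp; ring
    have h1 : l * t + c = t * (1 + l ^ 2 * t ^ 2) / (1 + l * t ^ 2) := by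
      rw [hc]; field_simp; ring
    rw [h1, h2, div_div_div_eq]
    field_simp
  -- compare c with the gamma argument
  have hsq : (1 - l) * Real.sqrt (1 + l ^ 2 * t ^ 2) ≤
      Real.sqrt (1 - l ^ 2) * (1 + l * t ^ 2) := by
    have h1 : (1 - l) * Real.sqrt (1 + l ^ 2 * t ^ 2) =
        Real.sqrt ((1 - l) ^ 2 * (1 + l ^ 2 * t ^ 2)) := by
      rw [Real.sqrt_mul (by positivity), Real.sqrt_sq (by linarith)]
    have h2 : Real.sqrt (1 - l ^ 2) * (1 + l * t ^ 2) =
        Real.sqrt ((1 - l ^ 2) * (1 + l * t ^ 2) ^ 2) := by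
      rw [Real.sqrt_mul (by nlinarith), Real.sqrt_sq (by positivity)]
    rw [h1, h2]
    apply Real.sqrt_le_sqrt
    nlinarith [mul_nonneg hl0 (sub_nonneg.2 hl1), sq_nonneg t, sq_nonneg (t*t),
      mul_nonneg (mul_nonneg hl0 (sub_nonneg.2 hl1)) (sq_nonneg t),
      mul_nonneg (mul_nonneg (mul_nonneg hl0 hl0) (sub_nonneg.2 (by nlinarith : l^2 ≤ 1))) (sq_nonneg (t*t))]
  have hcb : c ≤ Real.sqrt (1 - l ^ 2) * t / Real.sqrt (1 + l ^ 2 * t ^ 2) := by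
    have hs : (0:ℝ) < Real.sqrt (1 + l ^ 2 * t ^ 2) := Real.sqrt_pos.2 (by positivity)
    rw [hc, div_le_div_iff₀ hden hs]
    nlinarith [mul_le_mul_of_nonneg_left hsq ht, Real.sqrt_nonneg (1 - l^2), hs]
  calc Real.arctan t = Real.arctan (l * t) + Real.arctan c := hadd.symm
    _ ≤ _ := by
        have := Real.arctan_strictMono.monotone hcb
        linarith

lemma gamma_nonneg (l τ : ℝ) (hl0 : 0 ≤ l) (hτ0 : 0 ≤ τ) (hτ : τ ≤ π) :
    0 ≤ tortoiseGamma l τ := by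
  unfold tortoiseGamma
  split_ifs with h1 h2 h3
  · rw [← Real.arctan_zero]
    apply Real.arctan_strictMono.monotone
    have : 0 ≤ Real.tan τ := Real.tan_nonneg_of_nonneg_of_le_pi_div_two hτ0 h1.le
    positivity
  · rw [← Real.arctan_zero]
    apply Real.arctan_strictMono.monotone
    positivity
  · linarith [Real.pi_pos]
  · rw [← Real.arctan_zero]
    apply Real.arctan_strictMono.monotone
    have h4 : π - τ < π / 2 := by push_neg at h1; cases (lt_or_eq_of_le h1) with
      | inl h => linarith
      | inr h => exact absurd h.symm h2
    have : 0 ≤ Real.tan (π - τ) :=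
      Real.tan_nonneg_of_nonneg_of_le_pi_div_two (by linarith) h4.le
    positivity

/-- Lemma A: `θ(σ) + γ(σ) ≥ σ` for `σ ∈ [0, π/2]`. -/
lemma theta_add_gamma_ge (l σ : ℝ) (hl0 : 0 ≤ l) (hl1 : l ≤ 1)
    (hσ0 : 0 ≤ σ) (hσ : σ ≤ π / 2) :
    σ ≤ boundaryTheta l σ + tortoiseGamma l σ := by
  rcases lt_or_eq_of_le hσ with h | h
  · unfold boundaryTheta tortoiseGamma
    rw [if_pos h, if_pos h]
    have ht : 0 ≤ Real.tan σ := Real.tan_nonneg_of_nonneg_of_le_pi_div_two hσ0 h.le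
    have := key_arctan l (Real.tan σ) hl0 hl1 ht
    rwa [Real.arctan_tan (by linarith [Real.pi_pos]) h] at this
  · have hg : 0 ≤ tortoiseGamma l σ := gamma_nonneg l σ hl0 hσ0 (by linarith [Real.pi_pos])
    unfold boundaryTheta
    rw [if_neg (by rw [h]; exact lt_irrefl _), if_pos h]
    linarith

/-- Lemma B: `θ(τ) − γ(τ) ≤ τ` for `τ ∈ [0, π]`. -/
lemma theta_sub_gamma_le (l τ : ℝ) (hl0 : 0 ≤ l) (hl1 : l ≤ 1)
    (hτ0 : 0 ≤ τ) (hτ : τ ≤ π) :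
    boundaryTheta l τ - tortoiseGamma l τ ≤ τ := by
  rcases lt_trichotomy τ (π / 2) with h | h | h
  · have hg : 0 ≤ tortoiseGamma l τ := gamma_nonneg l τ hl0 hτ0 hτ
    have hθ : boundaryTheta l τ ≤ τ := by
      unfold boundaryTheta
      rw [if_pos h]
      have ht : 0 ≤ Real.tan τ := Real.tan_nonneg_of_nonneg_of_le_pi_div_two hτ0 h.le
      calc Real.arctan (l * Real.tan τ) ≤ Real.arctan (Real.tan τ) := by
            apply Real.arctan_strictMono.monotone; nlinarith
        _ = τ := Real.arctan_tan (by linarith [Real.pi_pos]) h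
    linarith
  · have hg : 0 ≤ tortoiseGamma l τ := gamma_nonneg l τ hl0 hτ0 hτ
    have hθ : boundaryTheta l τ = π / 2 := by
      unfold boundaryTheta
      rw [if_neg (by rw [h]; exact lt_irrefl _), if_pos h]
    rw [hθ]; linarith
  · set σ := π - τ with hσdef
    have hσ0 : 0 ≤ σ := by simp [hσdef]; linarith
    have hσlt : σ < π / 2 := by simp [hσdef]; linarith
    have hA := theta_add_gamma_ge l σ hl0 hl1 hσ0 hσlt.le
    have hθ : boundaryTheta l τ = π - boundaryTheta l σ := by
      unfold boundaryTheta
      rw [if_neg (by linarith), if_neg (by intro hh; linarith), if_pos hσlt]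
    have hγ : tortoiseGamma l τ = tortoiseGamma l σ := by
      unfold tortoiseGamma
      rw [if_neg (by linarith), if_neg (by intro hh; linarith), if_pos hσlt]
    rw [hθ, hγ]
    linarith

/-- Bulk-to-bulk causality, forward signal: for `ℓ ∈ [0,1]`, `τ₁ ∈ [0, π/2]`, and
`τ₂ ∈ [τ₁, π]`, the forward time delay
`(τ₂ − τ₁) + γ(τ₁) + γ(τ₂) − (θ(τ₂) − θ(τ₁))` is nonnegative. -/
theorem forward_delay_bulk_to_bulk (l : ℝ) (hl : l ∈ Set.Icc (0 : ℝ) 1)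
    (τ₁ τ₂ : ℝ) (h₁ : τ₁ ∈ Set.Icc 0 (π / 2)) (h₂ : τ₂ ∈ Set.Icc τ₁ π) :
    (τ₂ - τ₁) + tortoiseGamma l τ₁ + tortoiseGamma l τ₂ -
        (boundaryTheta l τ₂ - boundaryTheta l τ₁) ≥ 0 := by
  obtain ⟨hl0, hl1⟩ := hl
  obtain ⟨h10, h12⟩ := h₁
  obtain ⟨h21, h2π⟩ := h₂
  have hA := theta_add_gamma_ge l τ₁ hl0 hl1 h10 h12
  have hB := theta_sub_gamma_le l τ₂ hl0 hl1 (le_trans h10 h21) h2π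
  linarith
end

section
/- Fix ℓ ∈ [0, 1], let τ₁ ∈ [0, π/2] and τ₂ ∈ [τ₁, π]. Then the backward time delay for minimally encoded bulk-to-bulk motion along a null geodesic is nonpositive: (τ₂ − τ₁) + γ(τ₁) + γ(τ₂) + (θ(τ₂) − θ(τ₁)) ≤ 2π. That is, the backward boundary light signal, traversing the arc of angle 2π − (θ(τ₂) − θ(τ₁)) − γ(τ₁) − γ(τ₂), never arrives before the bulk point, whose travel time is τ₂ − τ₁. -/
open Real

lemma aux_arctan_le (l τ : ℝ) (hl0 : 0 ≤ l) (h0 : 0 ≤ τ) (h : τ < π / 2) :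
    Real.arctan (Real.sqrt (1 - l ^ 2) * Real.tan τ /
      Real.sqrt (1 + l ^ 2 * Real.tan τ ^ 2)) ≤ τ := by
  have ht : 0 ≤ Real.tan τ := Real.tan_nonneg_of_nonneg_of_le_pi_div_two h0 h.le
  have hb : (1 : ℝ) ≤ Real.sqrt (1 + l ^ 2 * Real.tan τ ^ 2) :=
    Real.one_le_sqrt.mpr (by nlinarith [mul_nonneg (sq_nonneg l) (sq_nonneg (Real.tan τ))])
  have ha : Real.sqrt (1 - l ^ 2) ≤ 1 :=
    Real.sqrt_le_one.mpr (by nlinarith)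
  have key : Real.sqrt (1 - l ^ 2) * Real.tan τ /
      Real.sqrt (1 + l ^ 2 * Real.tan τ ^ 2) ≤ Real.tan τ := by
    have h1 : Real.sqrt (1 - l ^ 2) * Real.tan τ /
        Real.sqrt (1 + l ^ 2 * Real.tan τ ^ 2) ≤
        Real.sqrt (1 - l ^ 2) * Real.tan τ :=
      div_le_self (by positivity) hb
    have h2 : Real.sqrt (1 - l ^ 2) * Real.tan τ ≤ Real.tan τ := by
      nlinarith [Real.sqrt_nonneg (1 - l ^ 2)]
    linarith
  calc Real.arctan _ ≤ Real.arctan (Real.tan τ) := Real.arctan_strictMono.monotone key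
    _ = τ := Real.arctan_tan (by linarith [Real.pi_pos]) h

lemma gamma_le (l τ : ℝ) (hl0 : 0 ≤ l) (h0 : 0 ≤ τ) (h : τ ≤ π / 2) :
    tortoiseGamma l τ ≤ τ := by
  unfold tortoiseGamma
  rcases lt_or_eq_of_le h with h' | h'
  · rw [if_pos h']; exact aux_arctan_le l τ hl0 h0 h'
  · rw [if_neg (by rw [h']; exact lt_irrefl _), if_pos h', h']
    split
    · exact (Real.arctan_lt_pi_div_two _).le
    · exact le_refl _

lemma theta_nonneg (l τ : ℝ) (hl0 : 0 ≤ l) (h0 : 0 ≤ τ) (h : τ ≤ π / 2) :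
    0 ≤ boundaryTheta l τ := by
  unfold boundaryTheta
  rcases lt_or_eq_of_le h with h' | h'
  · rw [if_pos h']
    rw [← Real.arctan_zero]
    exact Real.arctan_strictMono.monotone
      (mul_nonneg hl0 (Real.tan_nonneg_of_nonneg_of_le_pi_div_two h0 h'.le))
  · rw [if_neg (by rw [h']; exact lt_irrefl _), if_pos h']
    positivity

/-- Bulk-to-bulk causality, backward signal: for `ℓ ∈ [0,1]`, `τ₁ ∈ [0, π/2]`, and
`τ₂ ∈ [τ₁, π]`, the backward time delay is nonpositive:
`(τ₂ − τ₁) + γ(τ₁) + γ(τ₂) + (θ(τ₂) − θ(τ₁)) ≤ 2π`. -/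
theorem backward_delay_bulk_to_bulk (l : ℝ) (hl : l ∈ Set.Icc (0 : ℝ) 1)
    (τ₁ τ₂ : ℝ) (h₁ : τ₁ ∈ Set.Icc 0 (π / 2)) (h₂ : τ₂ ∈ Set.Icc τ₁ π) :
    (τ₂ - τ₁) + tortoiseGamma l τ₁ + tortoiseGamma l τ₂ +
        (boundaryTheta l τ₂ - boundaryTheta l τ₁) ≤ 2 * π := by
  obtain ⟨hl0, hl1⟩ := hl
  obtain ⟨h10, h12⟩ := h₁
  obtain ⟨h21, h2pi⟩ := h₂
  have hg1 : tortoiseGamma l τ₁ ≤ τ₁ := gamma_le l τ₁ hl0 h10 h12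
  have hth1 : 0 ≤ boundaryTheta l τ₁ := theta_nonneg l τ₁ hl0 h10 h12
  rcases le_or_gt τ₂ (π / 2) with hle | hgt
  · -- τ₂ ≤ π/2
    have hg2 : tortoiseGamma l τ₂ ≤ τ₂ := gamma_le l τ₂ hl0 (le_trans h10 h21) hle
    have hth2 : boundaryTheta l τ₂ ≤ π / 2 := by
      unfold boundaryTheta
      rcases lt_or_eq_of_le hle with h' | h'
      · rw [if_pos h']; exact (Real.arctan_lt_pi_div_two _).le
      · rw [if_neg (by rw [h']; exact lt_irrefl _), if_pos h']
    have hpi : 0 < π := Real.pi_pos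
    linarith
  · -- τ₂ > π/2
    have hne : τ₂ ≠ π / 2 := ne_of_gt hgt
    have hnlt : ¬ τ₂ < π / 2 := not_lt.mpr hgt.le
    set s := π - τ₂ with hs
    have hs0 : 0 ≤ s := by simp [hs]; linarith
    have hslt : s < π / 2 := by simp [hs]; linarith
    have hg2 : tortoiseGamma l τ₂ ≤ s := by
      unfold tortoiseGamma
      rw [if_neg hnlt, if_neg hne]
      exact aux_arctan_le l s hl0 hs0 hslt
    have hth2 : boundaryTheta l τ₂ ≤ π := by
      unfold boundaryTheta
      rw [if_neg hnlt, if_neg hne]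
      have : (0:ℝ) ≤ Real.arctan (l * Real.tan s) := by
        rw [← Real.arctan_zero]
        exact Real.arctan_strictMono.monotone
          (mul_nonneg hl0 (Real.tan_nonneg_of_nonneg_of_le_pi_div_two hs0 hslt.le))
      linarith
    have : tortoiseGamma l τ₂ ≤ π - τ₂ := by rwa [← hs]
    linarith
end
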